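/- Let n be even and fix plant matrices A, B, C ∈ ℝ^{n×n}, B_w, D_w ∈ ℝ^{n×n_w}, C_z, D_z ∈ ℝ^{n_z×n}, γ > 0, and an invertible matrix S ∈ ℝ^{n×n}. If the controller matrices A_K^S, B_K1^S, B_K2^S, B_K3^S, C_K^S ∈ ℝ^{n×n} solve the quantum LQG problem with bound γ and commutation matrix Θ_K^S = S·diag_{n/2}(J)·Sᵀ (i.e. there exists a symmetric positive definite P with 𝒜^S P + P(𝒜^S)ᵀ + ℬ^S(ℬ^S)ᵀ = 0 and tr(𝒞^S P (𝒞^S)ᵀ) < γ for the corresponding closed-loop matrices, and the physical realizability constraints hold with Θ_K^S), then the matrices A_K = S⁻¹A_K^S S, B_Ki = S⁻¹B_Ki^S (i = 1,2,3), C_K = C_K^S S solve the quantum LQG problem with bound γ and the canonical commutation matrix Θ_K = diag_{n/2}(J). -/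

import Mathlib

/-!
Passing to the controller coordinates `x_K ↦ S⁻¹ x_K` conjugates the closed loop by
`T = diag(I, S⁻¹)`: `𝒜 ↦ T 𝒜 T⁻¹`, `ℬ ↦ T ℬ`, `𝒞 ↦ 𝒞 T⁻¹`. Hence `T P Tᵀ` is again a positive
definite solution of the Lyapunov equation, with the same cost `tr(𝒞 P 𝒞ᵀ)`. Conjugating the
realizability constraints by `S⁻¹` turns the commutation matrix `S J Sᵀ` into `J`.
-/

noncomputable section
open Matrix

/-- The `n × n` block-diagonal matrix `diag(J, …, J)` with `n/2` copies of
`J = [[0,1],[-1,0]]` on the diagonal (for even `n`). -/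
def Jblock (n : ℕ) : Matrix (Fin n) (Fin n) ℝ :=
  Matrix.of fun i j =>
    if i.val + 1 = j.val ∧ i.val % 2 = 0 then (1 : ℝ)
    else if j.val + 1 = i.val ∧ j.val % 2 = 0 then (-1 : ℝ) else 0

/-- Closed-loop `𝒜 = [[A, B C_K],[B_K3 C, A_K]]`. -/
def clA (n : ℕ) (A B C AK BK3 CK : Matrix (Fin n) (Fin n) ℝ) :
    Matrix (Fin n ⊕ Fin n) (Fin n ⊕ Fin n) ℝ :=
  Matrix.fromBlocks A (B * CK) (BK3 * C) AK

/-- Closed-loop `ℬ = [[B_w, B, 0],[B_K3 D_w, B_K1, B_K2]]`. -/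
def clB (n nw : ℕ) (B : Matrix (Fin n) (Fin n) ℝ) (Bw Dw : Matrix (Fin n) (Fin nw) ℝ)
    (BK1 BK2 BK3 : Matrix (Fin n) (Fin n) ℝ) :
    Matrix (Fin n ⊕ Fin n) (Fin nw ⊕ (Fin n ⊕ Fin n)) ℝ :=
  Matrix.fromBlocks Bw (Matrix.fromCols B 0) (BK3 * Dw) (Matrix.fromCols BK1 BK2)

/-- Closed-loop `𝒞 = [C_z, D_z C_K]`. -/
def clC (n nz : ℕ) (Cz Dz : Matrix (Fin nz) (Fin n) ℝ)
    (CK : Matrix (Fin n) (Fin n) ℝ) : Matrix (Fin nz) (Fin n ⊕ Fin n) ℝ :=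
  Matrix.fromCols Cz (Dz * CK)

/-- The physical realizability constraints with commutation matrix `Θ_K`. -/
def PhysReal (n : ℕ) (ΘK AK BK1 BK2 BK3 CK : Matrix (Fin n) (Fin n) ℝ) : Prop :=
  AK * ΘK + ΘK * AKᵀ
      + BK1 * Jblock n * BK1ᵀ + BK2 * Jblock n * BK2ᵀ + BK3 * Jblock n * BK3ᵀ = 0 ∧
  BK1 = ΘK * CKᵀ * Jblock n


def LQGFeasible {m k l : Type*} [Fintype m] [Fintype k] [Fintype l]
    (𝒜 : Matrix m m ℝ) (ℬ : Matrix m k ℝ) (𝒞 : Matrix l m ℝ) (γ : ℝ) : Prop :=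
  ∃ P : Matrix m m ℝ, P.PosDef ∧ 𝒜 * P + P * 𝒜ᵀ + ℬ * ℬᵀ = 0 ∧ (𝒞 * P * 𝒞ᵀ).trace < γ

section Congruence

variable {m k l R : Type*} [Fintype m] [DecidableEq m] [Fintype k] [CommRing R]

theorem lyapunov_similarity (𝒜 P T Ti : Matrix m m R) (ℬ : Matrix m k R) (hT : Ti * T = 1) :
    T * 𝒜 * Ti * (T * P * Tᵀ) + T * P * Tᵀ * (T * 𝒜 * Ti)ᵀ + T * ℬ * (T * ℬ)ᵀ
      = T * (𝒜 * P + P * 𝒜ᵀ + ℬ * ℬᵀ) * Tᵀ := by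
  have hTt : Tᵀ * Tiᵀ = 1 := by rw [← transpose_mul, hT, transpose_one]
  simp only [transpose_mul, Matrix.mul_add, Matrix.add_mul, Matrix.mul_assoc]
  rw [← Matrix.mul_assoc Ti, hT, Matrix.one_mul, ← Matrix.mul_assoc Tᵀ, hTt, Matrix.one_mul]

theorem output_covariance_similarity (𝒞 : Matrix l m R) (P T Ti : Matrix m m R)
    (hT : Ti * T = 1) : 𝒞 * Ti * (T * P * Tᵀ) * (𝒞 * Ti)ᵀ = 𝒞 * P * 𝒞ᵀ := by
  have hTt : Tᵀ * Tiᵀ = 1 := by rw [← transpose_mul, hT, transpose_one]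
  simp only [transpose_mul, Matrix.mul_assoc]
  rw [← Matrix.mul_assoc Ti, hT, Matrix.one_mul, ← Matrix.mul_assoc Tᵀ, hTt, Matrix.one_mul]

end Congruence

theorem LQGFeasible.similarity {m k l : Type*} [Fintype m] [DecidableEq m] [Fintype k] [Fintype l]
    {𝒜 : Matrix m m ℝ} {ℬ : Matrix m k ℝ} {𝒞 : Matrix l m ℝ} {γ : ℝ}
    (h : LQGFeasible 𝒜 ℬ 𝒞 γ) {T Ti : Matrix m m ℝ} (hT : Ti * T = 1) :
    LQGFeasible (T * 𝒜 * Ti) (T * ℬ) (𝒞 * Ti) γ := by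
  obtain ⟨P, hP, hlyap, hcost⟩ := h
  have hTP : (T * P * Tᵀ).PosDef := by
    simpa only [conjTranspose_eq_transpose_of_trivial] using
      hP.mul_mul_conjTranspose_same
        (vecMul_injective_of_isUnit (IsUnit.of_mul_eq_one_right Ti hT))
  refine ⟨T * P * Tᵀ, hTP, ?_, ?_⟩
  · rw [lyapunov_similarity _ _ _ _ _ hT, hlyap, Matrix.mul_zero, Matrix.zero_mul]
  · rwa [output_covariance_similarity _ _ _ _ hT]

def controllerCoordChange {n : ℕ} (U : Matrix (Fin n) (Fin n) ℝ) :
    Matrix (Fin n ⊕ Fin n) (Fin n ⊕ Fin n) ℝ :=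
  fromBlocks 1 0 0 U

section ClosedLoop

variable {n : ℕ} (U V : Matrix (Fin n) (Fin n) ℝ)

theorem controllerCoordChange_mul :
    controllerCoordChange U * controllerCoordChange V = controllerCoordChange (U * V) := by
  simp [controllerCoordChange, fromBlocks_multiply]

theorem clA_controller_similarity (A B C AK BK3 CK : Matrix (Fin n) (Fin n) ℝ) :
    clA n A B C (U * AK * V) (U * BK3) (CK * V)
      = controllerCoordChange U * clA n A B C AK BK3 CK * controllerCoordChange V := by
  simp [clA, controllerCoordChange, fromBlocks_multiply, Matrix.mul_assoc]

theorem clB_controller_similarity {nw : ℕ} (B : Matrix (Fin n) (Fin n) ℝ)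
    (Bw Dw : Matrix (Fin n) (Fin nw) ℝ) (BK1 BK2 BK3 : Matrix (Fin n) (Fin n) ℝ) :
    clB n nw B Bw Dw (U * BK1) (U * BK2) (U * BK3)
      = controllerCoordChange U * clB n nw B Bw Dw BK1 BK2 BK3 := by
  simp [clB, controllerCoordChange, fromBlocks_multiply, mul_fromCols, Matrix.mul_assoc]

theorem clC_controller_similarity {nz : ℕ} (Cz Dz : Matrix (Fin nz) (Fin n) ℝ)
    (CK : Matrix (Fin n) (Fin n) ℝ) :
    clC n nz Cz Dz (CK * V) = clC n nz Cz Dz CK * controllerCoordChange V := by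
  simp [clC, controllerCoordChange, fromCols_mul_fromBlocks, Matrix.mul_assoc]

end ClosedLoop

theorem PhysReal.similarity {n : ℕ} {Θ S Si AK BK1 BK2 BK3 CK : Matrix (Fin n) (Fin n) ℝ}
    (h : PhysReal n (S * Θ * Sᵀ) AK BK1 BK2 BK3 CK) (hS : Si * S = 1) :
    PhysReal n Θ (Si * AK * S) (Si * BK1) (Si * BK2) (Si * BK3) (CK * S) := by
  have hSt : Sᵀ * Siᵀ = 1 := by rw [← transpose_mul, hS, transpose_one]
  have cancel : ∀ X : Matrix (Fin n) (Fin n) ℝ, Si * (S * X) = X := fun X => by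
    rw [← Matrix.mul_assoc, hS, Matrix.one_mul]
  obtain ⟨hlyap, hBK1⟩ := h
  constructor
  · have := congrArg (fun M => Si * M * Siᵀ) hlyap
    simp only [Matrix.mul_add, Matrix.add_mul, Matrix.mul_zero, Matrix.zero_mul] at this
    rw [← this]
    simp only [transpose_mul, Matrix.mul_assoc, cancel, hSt, Matrix.mul_one]
  · simp only [hBK1, transpose_mul, Matrix.mul_assoc, cancel]

theorem quantum_lqg_rescaled_commutation_general
    (n nw nz : ℕ)
    (A B C : Matrix (Fin n) (Fin n) ℝ)
    (Bw Dw : Matrix (Fin n) (Fin nw) ℝ)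
    (Cz Dz : Matrix (Fin nz) (Fin n) ℝ)
    (γ : ℝ)
    (S : Matrix (Fin n) (Fin n) ℝ) (hS : IsUnit S.det)
    (AKS BK1S BK2S BK3S CKS : Matrix (Fin n) (Fin n) ℝ)
    (hlqg : ∃ P : Matrix (Fin n ⊕ Fin n) (Fin n ⊕ Fin n) ℝ, P.PosDef ∧
      clA n A B C AKS BK3S CKS * P + P * (clA n A B C AKS BK3S CKS)ᵀ
        + clB n nw B Bw Dw BK1S BK2S BK3S * (clB n nw B Bw Dw BK1S BK2S BK3S)ᵀ = 0 ∧
      (clC n nz Cz Dz CKS * P * (clC n nz Cz Dz CKS)ᵀ).trace < γ)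
    (hpr : PhysReal n (S * Jblock n * Sᵀ) AKS BK1S BK2S BK3S CKS) :
    -- the transformed controller
    let AK := S⁻¹ * AKS * S
    let BK1 := S⁻¹ * BK1S
    let BK2 := S⁻¹ * BK2S
    let BK3 := S⁻¹ * BK3S
    let CK := CKS * S
    (∃ P' : Matrix (Fin n ⊕ Fin n) (Fin n ⊕ Fin n) ℝ, P'.PosDef ∧
      clA n A B C AK BK3 CK * P' + P' * (clA n A B C AK BK3 CK)ᵀ
        + clB n nw B Bw Dw BK1 BK2 BK3 * (clB n nw B Bw Dw BK1 BK2 BK3)ᵀ = 0 ∧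
      (clC n nz Cz Dz CK * P' * (clC n nz Cz Dz CK)ᵀ).trace < γ) ∧
    PhysReal n (Jblock n) AK BK1 BK2 BK3 CK := by
  intro AK BK1 BK2 BK3 CK
  have hSinv : S⁻¹ * S = 1 := nonsing_inv_mul S hS
  have hT : controllerCoordChange S * controllerCoordChange S⁻¹ = 1 := by
    rw [controllerCoordChange_mul, mul_nonsing_inv S hS, controllerCoordChange, fromBlocks_one]
  have hfeas : LQGFeasible (clA n A B C AK BK3 CK) (clB n nw B Bw Dw BK1 BK2 BK3)
      (clC n nz Cz Dz CK) γ := by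
    rw [clA_controller_similarity, clB_controller_similarity, clC_controller_similarity]
    exact LQGFeasible.similarity hlqg hT
  exact ⟨hfeas, hpr.similarity hSinv⟩

/-- Remark 1 of the paper: a solution of the quantum LQG problem with
bound `γ` and commutation matrix `Θ_K^S = S·diag_{n/2}(J)·Sᵀ` transforms, via
`A_K = S⁻¹A_K^S S`, `B_Ki = S⁻¹B_Ki^S`, `C_K = C_K^S S`, into a solution with the
canonical commutation matrix `Θ_K = diag_{n/2}(J)`. -/
theorem quantum_lqg_rescaled_commutation
    (n nw nz : ℕ) (hne : Even n)
    (A B C : Matrix (Fin n) (Fin n) ℝ)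
    (Bw Dw : Matrix (Fin n) (Fin nw) ℝ)
    (Cz Dz : Matrix (Fin nz) (Fin n) ℝ)
    (γ : ℝ) (hγ : 0 < γ)
    (S : Matrix (Fin n) (Fin n) ℝ) (hS : IsUnit S.det)
    (AKS BK1S BK2S BK3S CKS : Matrix (Fin n) (Fin n) ℝ)
    (hlqg : ∃ P : Matrix (Fin n ⊕ Fin n) (Fin n ⊕ Fin n) ℝ, P.PosDef ∧
      clA n A B C AKS BK3S CKS * P + P * (clA n A B C AKS BK3S CKS)ᵀ
        + clB n nw B Bw Dw BK1S BK2S BK3S * (clB n nw B Bw Dw BK1S BK2S BK3S)ᵀ = 0 ∧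
      (clC n nz Cz Dz CKS * P * (clC n nz Cz Dz CKS)ᵀ).trace < γ)
    (hpr : PhysReal n (S * Jblock n * Sᵀ) AKS BK1S BK2S BK3S CKS) :
    -- the transformed controller
    let AK := S⁻¹ * AKS * S
    let BK1 := S⁻¹ * BK1S
    let BK2 := S⁻¹ * BK2S
    let BK3 := S⁻¹ * BK3S
    let CK := CKS * S
    (∃ P' : Matrix (Fin n ⊕ Fin n) (Fin n ⊕ Fin n) ℝ, P'.PosDef ∧
      clA n A B C AK BK3 CK * P' + P' * (clA n A B C AK BK3 CK)ᵀ
        + clB n nw B Bw Dw BK1 BK2 BK3 * (clB n nw B Bw Dw BK1 BK2 BK3)ᵀ = 0 ∧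
      (clC n nz Cz Dz CK * P' * (clC n nz Cz Dz CK)ᵀ).trace < γ) ∧
    PhysReal n (Jblock n) AK BK1 BK2 BK3 CK :=
  quantum_lqg_rescaled_commutation_general n nw nz A B C Bw Dw Cz Dz γ S hS AKS BK1S BK2S BK3S CKS
    hlqg hpr
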